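/- arXiv:2305.18375 — 2 statements merged into one kernel-verified Lean document; each statement's English description precedes it below -/
import Mathlib

section
/- Let P0 be a probability distribution on [0,∞) whose moment generating function t ↦ E_{x0∼P0}[e^{t x0}] is finite for all |t| < h, for some h > 0. For each λ > 0, let μ_λ be the distribution of ẑ0 = z0/λ, where x0 ∼ P0 and, conditionally on x0, z0 follows the Poisson distribution with rate λx0. Then μ_λ converges in distribution (weakly) to P0 as λ → ∞. -/
/-!
Given `x0 = x ≥ 0`, the variable `ẑ0 = z0 / λ` has mean `x` and variance `x / λ`, so by
Chebyshev's inequality `E[f(ẑ0) | x0 = x] → f(x)` for every bounded continuous `f`. These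
conditional expectations are bounded by `‖f‖`, and dominated convergence over `P0` concludes.
-/

open MeasureTheory Filter Topology

/-- The Poisson probability mass function `Pois(k; μ) = μ^k e^{−μ}/k!`. -/
noncomputable def poissonPMF (μ : ℝ) (k : ℕ) : ℝ :=
  μ ^ k * Real.exp (-μ) / (Nat.factorial k)

/-- The distribution `μ_λ` of `ẑ0 = z0/λ`, where `x0 ∼ P0` and `z0 | x0 ∼ Pois(λ x0)`:
a discrete measure on ℝ putting mass `∫ Pois(k; λ x0) dP0(x0)` at each point `k/λ`. -/
noncomputable def mixedPoissonScaled (P0 : Measure ℝ) (lam : ℝ) : Measure ℝ :=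
  Measure.sum fun k : ℕ =>
    (ENNReal.ofReal (∫ x, poissonPMF (lam * x) k ∂P0)) • Measure.dirac ((k : ℝ) / lam)

open scoped BoundedContinuousFunction

lemma poissonPMF_nonneg {μ : ℝ} (hμ : 0 ≤ μ) (k : ℕ) : 0 ≤ poissonPMF μ k := by
  unfold poissonPMF
  positivity

lemma hasSum_poissonPMF (μ : ℝ) : HasSum (poissonPMF μ) 1 := by
  have h := (NormedSpace.expSeries_div_hasSum_exp μ).mul_right (Real.exp (-μ))
  rw [← Real.exp_eq_exp_ℝ, ← Real.exp_add, add_neg_cancel, Real.exp_zero] at h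
  rwa [show poissonPMF μ = fun k => μ ^ k / k.factorial * Real.exp (-μ) from
    funext fun k => by rw [poissonPMF, div_mul_eq_mul_div]]

lemma poissonPMF_le_one {μ : ℝ} (hμ : 0 ≤ μ) (k : ℕ) : poissonPMF μ k ≤ 1 :=
  le_hasSum (hasSum_poissonPMF μ) k fun j _ => poissonPMF_nonneg hμ j

lemma continuous_poissonPMF (k : ℕ) : Continuous fun μ => poissonPMF μ k := by
  unfold poissonPMF
  fun_prop

lemma descFactorial_mul_poissonPMF_add (μ : ℝ) (j k : ℕ) :
    ((k + j).descFactorial j : ℝ) * poissonPMF μ (k + j) = μ ^ j * poissonPMF μ k := by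
  have hfac : ((k + j).factorial : ℝ) = k.factorial * (k + j).descFactorial j := by
    have := Nat.factorial_mul_descFactorial (Nat.le_add_left j k)
    rw [Nat.add_sub_cancel] at this
    exact_mod_cast this.symm
  have hpos : ((k + j).descFactorial j : ℝ) ≠ 0 := by
    exact_mod_cast (Nat.descFactorial_pos.mpr (Nat.le_add_left j k)).ne'
  unfold poissonPMF
  rw [hfac]
  field_simp
  ring

lemma hasSum_descFactorial_mul_poissonPMF (μ : ℝ) (j : ℕ) :
    HasSum (fun k : ℕ => (k.descFactorial j : ℝ) * poissonPMF μ k) (μ ^ j) := by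
  rw [← hasSum_nat_add_iff' j]
  have hlow : ∑ k ∈ Finset.range j, (k.descFactorial j : ℝ) * poissonPMF μ k = 0 :=
    Finset.sum_eq_zero fun k hk => by
      rw [Nat.descFactorial_eq_zero_iff_lt.mpr (Finset.mem_range.mp hk), Nat.cast_zero, zero_mul]
  simpa only [hlow, sub_zero, descFactorial_mul_poissonPMF_add, mul_one] using
    (hasSum_poissonPMF μ).mul_left (μ ^ j)

lemma hasSum_sq_sub_mul_poissonPMF (μ : ℝ) :
    HasSum (fun k : ℕ => ((k : ℝ) - μ) ^ 2 * poissonPMF μ k) μ := by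
  have h2 := hasSum_descFactorial_mul_poissonPMF μ 2
  have h1 := hasSum_descFactorial_mul_poissonPMF μ 1
  simp only [Nat.cast_descFactorial_two, Nat.descFactorial_one] at h1 h2
  convert h2.add ((h1.mul_left (1 - 2 * μ)).add ((hasSum_poissonPMF μ).mul_left (μ ^ 2))) using 1
  · ext k; ring
  · ring

lemma abs_sub_le_add_mul_sq (f : ℝ →ᵇ ℝ) {x ε δ : ℝ} (hδ : 0 < δ)
    (hf : ∀ y, |y - x| < δ → |f y - f x| ≤ ε) (y : ℝ) :
    |f y - f x| ≤ ε + 2 * ‖f‖ / δ ^ 2 * (y - x) ^ 2 := by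
  have hε : 0 ≤ ε := (abs_nonneg _).trans (hf x (by simpa using hδ))
  rcases lt_or_ge |y - x| δ with hnear | hfar
  · have : 0 ≤ 2 * ‖f‖ / δ ^ 2 * (y - x) ^ 2 := by positivity
    linarith [hf y hnear]
  · have hosc : |f y - f x| ≤ 2 * ‖f‖ := by
      simpa only [Real.dist_eq] using f.dist_le_two_norm y x
    have hsq : 1 ≤ (y - x) ^ 2 / δ ^ 2 := by
      rw [one_le_div (by positivity), ← sq_abs (y - x)]
      exact pow_le_pow_left₀ hδ.le hfar 2
    calc |f y - f x| ≤ 2 * ‖f‖ * ((y - x) ^ 2 / δ ^ 2) :=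
          hosc.trans (le_mul_of_one_le_right (by positivity) hsq)
      _ = 2 * ‖f‖ / δ ^ 2 * (y - x) ^ 2 := by ring
      _ ≤ ε + 2 * ‖f‖ / δ ^ 2 * (y - x) ^ 2 := le_add_of_nonneg_left hε

section ProbabilityWeights

variable {p : ℕ → ℝ} (hp0 : ∀ k, 0 ≤ p k)
include hp0

lemma norm_mul_le_of_norm_le {c : ℕ → ℝ} {M : ℝ} (hc : ∀ k, ‖c k‖ ≤ M) (k : ℕ) :
    ‖c k * p k‖ ≤ M * p k := by
  rw [norm_mul, Real.norm_of_nonneg (hp0 k)]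
  exact mul_le_mul_of_nonneg_right (hc k) (hp0 k)

variable (hp : HasSum p 1)
include hp

lemma summable_mul_of_norm_le {c : ℕ → ℝ} {M : ℝ} (hc : ∀ k, ‖c k‖ ≤ M) :
    Summable fun k => c k * p k :=
  (hp.summable.mul_left M).of_norm_bounded (norm_mul_le_of_norm_le hp0 hc)

lemma norm_tsum_mul_le_of_norm_le {c : ℕ → ℝ} {M : ℝ} (hc : ∀ k, ‖c k‖ ≤ M) :
    ‖∑' k, c k * p k‖ ≤ M :=
  tsum_of_norm_bounded (by simpa using hp.mul_left M) (norm_mul_le_of_norm_le hp0 hc)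

/-- Chebyshev's estimate: within `δ` of `x` the function `f` moves by at most `ε`, and the weights
carry mass at most `v / δ ^ 2` farther away. -/
lemma abs_tsum_mul_sub_le_of_hasSum_sq_sub (f : ℝ →ᵇ ℝ) {a : ℕ → ℝ} {x v : ℝ}
    (hv : HasSum (fun k => (a k - x) ^ 2 * p k) v) {ε δ : ℝ} (hδ : 0 < δ)
    (hf : ∀ y, |y - x| < δ → |f y - f x| ≤ ε) :
    |∑' k, f (a k) * p k - f x| ≤ ε + 2 * ‖f‖ / δ ^ 2 * v := by
  have hsum : Summable fun k => f (a k) * p k :=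
    summable_mul_of_norm_le hp0 hp fun k => f.norm_coe_le_norm (a k)
  have hdiff : ∑' k, f (a k) * p k - f x = ∑' k, (f (a k) - f x) * p k := by
    have hconst : ∑' k, f x * p k = f x := by simpa using (hp.mul_left (f x)).tsum_eq
    simp only [sub_mul]
    rw [hsum.tsum_sub (hp.mul_left (f x)).summable, hconst]
  have hbound := (hp.mul_left ε).add (hv.mul_left (2 * ‖f‖ / δ ^ 2))
  rw [mul_one] at hbound
  rw [hdiff, ← Real.norm_eq_abs]
  refine tsum_of_norm_bounded hbound fun k => ?_
  rw [norm_mul, Real.norm_of_nonneg (hp0 k), Real.norm_eq_abs, ← mul_assoc, ← add_mul]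
  exact mul_le_mul_of_nonneg_right (abs_sub_le_add_mul_sq f hδ hf (a k)) (hp0 k)

end ProbabilityWeights

lemma hasSum_sq_div_sub_mul_poissonPMF {lam : ℝ} (hlam : lam ≠ 0) (x : ℝ) :
    HasSum (fun k : ℕ => ((k : ℝ) / lam - x) ^ 2 * poissonPMF (lam * x) k) (x / lam) := by
  have h := (hasSum_sq_sub_mul_poissonPMF (lam * x)).mul_left (lam ^ 2)⁻¹
  rw [show (lam ^ 2)⁻¹ * (lam * x) = x / lam by field_simp] at h
  refine h.congr_fun fun k => ?_
  field_simp

lemma tendsto_tsum_mul_poissonPMF_mul (f : ℝ →ᵇ ℝ) {x : ℝ} (hx : 0 ≤ x) :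
    Tendsto (fun lam : ℝ => ∑' k : ℕ, f (k / lam) * poissonPMF (lam * x) k) atTop
      (𝓝 (f x)) := by
  refine Metric.tendsto_nhds.mpr fun ε hε => ?_
  obtain ⟨δ, hδ, hfδ⟩ := Metric.continuous_iff.mp f.continuous x (ε / 2) (half_pos hε)
  have hvar : Tendsto (fun lam : ℝ => 2 * ‖f‖ / δ ^ 2 * (x / lam)) atTop (𝓝 0) := by
    simpa using (tendsto_const_nhds (x := x).div_atTop tendsto_id).const_mul (2 * ‖f‖ / δ ^ 2)
  filter_upwards [eventually_gt_atTop 0, hvar.eventually (gt_mem_nhds (half_pos hε))]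
    with lam hlam hsmall
  have := abs_tsum_mul_sub_le_of_hasSum_sq_sub (poissonPMF_nonneg (mul_nonneg hlam.le hx))
    (hasSum_poissonPMF _) f
    (hasSum_sq_div_sub_mul_poissonPMF hlam.ne' x) hδ
    fun y hy => (hfδ y (by rwa [Real.dist_eq])).le
  rw [Real.dist_eq]
  linarith

section Mixture

variable {P0 : Measure ℝ} (hsupp : P0 (Set.Iio 0) = 0)
include hsupp

lemma ae_nonneg_of_measure_Iio_eq_zero : ∀ᵐ x ∂P0, 0 ≤ x := by
  rw [ae_iff]
  simp only [not_le]
  exact hsupp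

variable {lam : ℝ} (hlam : 0 ≤ lam)
include hlam

lemma ae_poissonPMF_mul_nonneg (k : ℕ) : ∀ᵐ x ∂P0, 0 ≤ poissonPMF (lam * x) k := by
  filter_upwards [ae_nonneg_of_measure_Iio_eq_zero hsupp] with x hx
  exact poissonPMF_nonneg (mul_nonneg hlam hx) k

lemma aestronglyMeasurable_tsum_mul_poissonPMF_mul (f : ℝ →ᵇ ℝ) :
    AEStronglyMeasurable (fun x => ∑' k : ℕ, f (k / lam) * poissonPMF (lam * x) k) P0 := by
  refine aestronglyMeasurable_of_tendsto_ae (atTop : Filter ℕ)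
    (f := fun n x => ∑ k ∈ Finset.range n, f (k / lam) * poissonPMF (lam * x) k)
    (fun n => Continuous.aestronglyMeasurable ?_) ?_
  · exact continuous_finsetSum _ fun k _ =>
      continuous_const.mul ((continuous_poissonPMF k).comp (continuous_const_mul lam))
  · filter_upwards [ae_nonneg_of_measure_Iio_eq_zero hsupp] with x hx
    exact (summable_mul_of_norm_le (poissonPMF_nonneg (mul_nonneg hlam hx))
      (hasSum_poissonPMF _) fun k => f.norm_coe_le_norm _).hasSum.tendsto_sum_nat

lemma integral_poissonPMF_mul_nonneg (k : ℕ) : 0 ≤ ∫ x, poissonPMF (lam * x) k ∂P0 :=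
  integral_nonneg_of_ae (ae_poissonPMF_mul_nonneg hsupp hlam k)

variable [IsFiniteMeasure P0]

lemma integrable_poissonPMF_mul (k : ℕ) : Integrable (fun x => poissonPMF (lam * x) k) P0 := by
  refine (integrable_const 1).mono'
    ((continuous_poissonPMF k).comp (continuous_const_mul lam)).aestronglyMeasurable ?_
  filter_upwards [ae_nonneg_of_measure_Iio_eq_zero hsupp] with x hx
  rw [Real.norm_of_nonneg (poissonPMF_nonneg (mul_nonneg hlam hx) k)]
  exact poissonPMF_le_one (mul_nonneg hlam hx) k

lemma summable_integral_poissonPMF_mul :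
    Summable fun k : ℕ => ∫ x, poissonPMF (lam * x) k ∂P0 := by
  refine summable_of_sum_range_le (c := P0.real Set.univ)
    (integral_poissonPMF_mul_nonneg hsupp hlam) fun n => ?_
  rw [← integral_finsetSum _ fun k _ => integrable_poissonPMF_mul hsupp hlam k]
  calc ∫ x, ∑ k ∈ Finset.range n, poissonPMF (lam * x) k ∂P0 ≤ ∫ _, 1 ∂P0 := by
        refine integral_mono_ae (integrable_finsetSum _ fun k _ =>
          integrable_poissonPMF_mul hsupp hlam k) (integrable_const 1) ?_
        filter_upwards [ae_nonneg_of_measure_Iio_eq_zero hsupp] with x hx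
        exact sum_le_hasSum _ (fun k _ => poissonPMF_nonneg (mul_nonneg hlam hx) k)
          (hasSum_poissonPMF _)
    _ = P0.real Set.univ := by simp

lemma integral_mixedPoissonScaled (f : ℝ →ᵇ ℝ) :
    ∫ y, f y ∂mixedPoissonScaled P0 lam =
      ∫ x, ∑' k : ℕ, f (k / lam) * poissonPMF (lam * x) k ∂P0 := by
  rw [mixedPoissonScaled, integral_sum_dirac fun _ => ENNReal.ofReal_ne_top,
    ← integral_tsum_of_summable_integral_norm]
  · congr with k
    rw [ENNReal.toReal_ofReal (integral_poissonPMF_mul_nonneg hsupp hlam k), smul_eq_mul,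
      integral_const_mul, mul_comm]
  · exact fun k => (integrable_poissonPMF_mul hsupp hlam k).const_mul _
  · refine ((summable_integral_poissonPMF_mul hsupp hlam).mul_left ‖f‖).of_nonneg_of_le
      (fun k => integral_nonneg fun x => norm_nonneg _) fun k => ?_
    rw [← integral_const_mul]
    refine integral_mono_ae ((integrable_poissonPMF_mul hsupp hlam k).const_mul _).norm
      ((integrable_poissonPMF_mul hsupp hlam k).const_mul _) ?_
    filter_upwards [ae_poissonPMF_mul_nonneg hsupp hlam k] with x hx
    rw [norm_mul, Real.norm_of_nonneg hx]
    exact mul_le_mul_of_nonneg_right (f.norm_coe_le_norm _) hx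

end Mixture

theorem mixedPoissonScaled_tendsto_weakly_general
    (P0 : Measure ℝ) [IsProbabilityMeasure P0] (hsupp : P0 (Set.Iio 0) = 0) :
    ∀ f : BoundedContinuousFunction ℝ ℝ,
      Tendsto (fun lam : ℝ => ∫ y, f y ∂(mixedPoissonScaled P0 lam)) atTop
        (𝓝 (∫ x, f x ∂P0)) := by
  intro f
  have hae := ae_nonneg_of_measure_Iio_eq_zero hsupp
  have hdom : Tendsto
      (fun lam : ℝ => ∫ x, ∑' k : ℕ, f (k / lam) * poissonPMF (lam * x) k ∂P0) atTop
      (𝓝 (∫ x, f x ∂P0)) := by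
    refine tendsto_integral_filter_of_norm_le_const ?_ ⟨‖f‖, ?_⟩ ?_
    · filter_upwards [eventually_ge_atTop 0] with lam hlam
      exact aestronglyMeasurable_tsum_mul_poissonPMF_mul hsupp hlam f
    · filter_upwards [eventually_ge_atTop 0] with lam hlam
      filter_upwards [hae] with x hx
      exact norm_tsum_mul_le_of_norm_le (poissonPMF_nonneg (mul_nonneg hlam hx))
        (hasSum_poissonPMF _) fun k => f.norm_coe_le_norm _
    · filter_upwards [hae] with x hx
      exact tendsto_tsum_mul_poissonPMF_mul f hx
  refine hdom.congr' ?_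
  filter_upwards [eventually_ge_atTop 0] with lam hlam
  exact (integral_mixedPoissonScaled hsupp hlam f).symm

/-- If `P0` is a probability distribution on `[0,∞)` whose moment generating function
`t ↦ E_{x0∼P0}[e^{t x0}]` is finite for all `|t| < h` for some `h > 0`, then the
distribution `μ_λ` of `ẑ0 = z0/λ` (with `x0 ∼ P0`, `z0 | x0 ∼ Pois(λ x0)`) converges
weakly (in distribution) to `P0` as `λ → ∞`, i.e. integrals of every bounded continuous
function converge. -/
theorem mixedPoissonScaled_tendsto_weakly
    (P0 : Measure ℝ) [IsProbabilityMeasure P0] (hsupp : P0 (Set.Iio 0) = 0)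
    (h : ℝ) (hh : 0 < h)
    (hmgf : ∀ t : ℝ, |t| < h → Integrable (fun x => Real.exp (t * x)) P0) :
    ∀ f : BoundedContinuousFunction ℝ ℝ,
      Tendsto (fun lam : ℝ => ∫ y, f y ∂(mixedPoissonScaled P0 lam)) atTop
        (𝓝 (∫ x, f x ∂P0)) :=
  mixedPoissonScaled_tendsto_weakly_general P0 hsupp
end

section
/- (Shifted-binomial posterior for the binomial JUMP chain) Let x0 be a non-negative integer and 0 < α_t < α_{t−1} ≤ 1 with α_{t−1} < 1. Let z_{t−1} ∼ Binomial(x0, α_{t−1}) and, conditionally on z_{t−1}, let z_t ∼ Binomial(z_{t−1}, α_t/α_{t−1}). Then the conditional distribution of z_{t−1} given z_t is a shifted binomial: conditionally on z_t, z_{t−1} − z_t ∼ Binomial(x0 − z_t, (α_{t−1} − α_t)/(1 − α_t)). Equivalently, for all integers z_t ≤ m ≤ x0, Binomial(m; x0, α_{t−1}) Binomial(z_t; m, α_t/α_{t−1}) / Binomial(z_t; x0, α_t) = Binomial(m − z_t; x0 − z_t, (α_{t−1} − α_t)/(1 − α_t)). -/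
/-!
Both the joint law `Binomial(m; x0, a) Binomial(z; m, b/a)` and the product
`Binomial(z; x0, b) Binomial(m − z; x0 − z, (a − b)/(1 − b))` expand to
`c · b^z (a − b)^(m − z) (1 − a)^(x0 − m)`, with the binomial coefficients matched by
`C(n, m) C(m, z) = C(n, z) C(n − z, m − z)`; dividing by the marginal `Binomial(z; x0, b)`
is Bayes' rule.
-/

/-- The binomial probability mass function `Binomial(k; n, p) = C(n,k) p^k (1−p)^{n−k}`. -/
noncomputable def binomialPMF (n : ℕ) (p : ℝ) (k : ℕ) : ℝ :=
  (n.choose k : ℝ) * p ^ k * (1 - p) ^ (n - k)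

lemma binomialPMF_mul_binomialPMF_div {a : ℝ} (ha : a ≠ 0) (b : ℝ) {n m z : ℕ} (hzm : z ≤ m) :
    binomialPMF n a m * binomialPMF m (b / a) z
      = (n.choose m * m.choose z : ℝ) * b ^ z * (a - b) ^ (m - z) * (1 - a) ^ (n - m) := by
  obtain ⟨d, rfl⟩ := Nat.exists_eq_add_of_le hzm
  have hcompl : 1 - b / a = (a - b) / a := by field_simp
  simp only [binomialPMF, hcompl, Nat.add_sub_cancel_left, div_pow, pow_add]
  field_simp

lemma binomialPMF_mul_binomialPMF_shift {b : ℝ} (hb : b ≠ 1) (a : ℝ) {n m z : ℕ}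
    (hzm : z ≤ m) (hmn : m ≤ n) :
    binomialPMF n b z * binomialPMF (n - z) ((a - b) / (1 - b)) (m - z)
      = (n.choose z * (n - z).choose (m - z) : ℝ) * b ^ z * (a - b) ^ (m - z)
          * (1 - a) ^ (n - m) := by
  obtain ⟨d, rfl⟩ := Nat.exists_eq_add_of_le hzm
  obtain ⟨e, rfl⟩ := Nat.exists_eq_add_of_le hmn
  have h1b : 1 - b ≠ 0 := sub_ne_zero.mpr hb.symm
  have hcompl : 1 - (a - b) / (1 - b) = (1 - a) / (1 - b) := by field_simp; ring
  have he : z + d + e - z = d + e := by omega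
  simp only [binomialPMF, hcompl, he, Nat.add_sub_cancel_left, div_pow, pow_add]
  field_simp

lemma binomialPMF_mul_binomialPMF_div_eq {a b : ℝ} (ha : a ≠ 0) (hb : b ≠ 1) {n m z : ℕ}
    (hzm : z ≤ m) (hmn : m ≤ n) :
    binomialPMF n a m * binomialPMF m (b / a) z
      = binomialPMF n b z * binomialPMF (n - z) ((a - b) / (1 - b)) (m - z) := by
  rw [binomialPMF_mul_binomialPMF_div ha b hzm, binomialPMF_mul_binomialPMF_shift hb a hzm hmn]
  exact_mod_cast congrArg (fun k : ℕ => (k : ℝ) * b ^ z * (a - b) ^ (m - z) * (1 - a) ^ (n - m))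
    (Nat.choose_mul (n := n) hzm)

lemma binomialPMF_pos {n k : ℕ} {p : ℝ} (hk : k ≤ n) (hp0 : 0 < p) (hp1 : p < 1) :
    0 < binomialPMF n p k := by
  have hq : 0 < 1 - p := sub_pos.mpr hp1
  have hchoose := Nat.choose_pos hk
  unfold binomialPMF
  positivity

theorem binomial_jump_shifted_binomial_posterior_general
    (x0 : ℕ) (a b : ℝ) (hb : 0 < b) (hba : b < a) (ha1 : a ≤ 1)
    (z m : ℕ) (hzm : z ≤ m) (hmx : m ≤ x0) :
    binomialPMF x0 a m * binomialPMF m (b / a) z / binomialPMF x0 b z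
      = binomialPMF (x0 - z) ((a - b) / (1 - b)) (m - z) := by
  have hb1 : b < 1 := hba.trans_le ha1
  have hmarginal : binomialPMF x0 b z ≠ 0 := (binomialPMF_pos (hzm.trans hmx) hb hb1).ne'
  rw [div_eq_iff hmarginal, binomialPMF_mul_binomialPMF_div_eq (hb.trans hba).ne' hb1.ne hzm hmx,
    mul_comm]

/-- Shifted-binomial posterior for the binomial JUMP chain: with
`z_{t−1} ∼ Binomial(x0, α_{t−1})` and `z_t | z_{t−1} ∼ Binomial(z_{t−1}, α_t/α_{t−1})`
(so that `z_t ∼ Binomial(x0, α_t)` marginally), the conditional distribution of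
`z_{t−1}` given `z_t` satisfies, for all integers `z_t ≤ m ≤ x0`,
`Binomial(m; x0, α_{t−1}) Binomial(z_t; m, α_t/α_{t−1}) / Binomial(z_t; x0, α_t)
  = Binomial(m − z_t; x0 − z_t, (α_{t−1} − α_t)/(1 − α_t))`.
Here `a` plays the role of `α_{t−1}` and `b` the role of `α_t`, with
`0 < b < a ≤ 1` and `a < 1`. -/
theorem binomial_jump_shifted_binomial_posterior
    (x0 : ℕ) (a b : ℝ) (hb : 0 < b) (hba : b < a) (ha1 : a ≤ 1) (ha : a < 1)
    (z m : ℕ) (hzm : z ≤ m) (hmx : m ≤ x0) :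
    binomialPMF x0 a m * binomialPMF m (b / a) z / binomialPMF x0 b z
      = binomialPMF (x0 - z) ((a - b) / (1 - b)) (m - z) :=
  binomial_jump_shifted_binomial_posterior_general x0 a b hb hba ha1 z m hzm hmx
end
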